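/- Let u be a C³ solution of ∑_{i=1}^n arctan λᵢ(x) = ψ(x) on a neighborhood of x₀ ∈ ℝⁿ with ψ of class C¹, such that D²u(x₀) = diag(λ₁,…,λₙ) is diagonal and Du(x₀) ≠ 0. Then at x₀: ∑_{a=1}^n g^{aa} ∂_{aa}|Du| = ∑_{i=1}^n (∂ᵢψ) uᵢ / |Du| + ∑_{a=1}^n g^{aa} (|Du|² − u_a²) λ_a² / |Du|³, and in particular ∑_{a=1}^n g^{aa} ∂_{aa}|Du| ≥ ∑_{i=1}^n (∂ᵢψ) uᵢ / |Du|, where uᵢ = ∂ᵢu(x₀) and g^{aa} = 1/(1+λ_a²). -/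

import Mathlib

open Real Metric Finset MeasureTheory Matrix

noncomputable section

abbrev ES (n : ℕ) := EuclideanSpace ℝ (Fin n)

/-- the `i`-th standard basis vector of `ℝⁿ` -/
def evec (n : ℕ) (i : Fin n) : ES n := EuclideanSpace.single i 1

/-- the Hessian matrix `D²u(x)` -/
def Hess (n : ℕ) (u : ES n → ℝ) (x : ES n) : Matrix (Fin n) (Fin n) ℝ :=
  fun i j => iteratedFDeriv ℝ 2 u x ![evec n i, evec n j]

/-- the inverse `(gⁱʲ)` of the induced metric `g = Iₙ + (D²u)²` -/
def ginv (n : ℕ) (u : ES n → ℝ) (x : ES n) : Matrix (Fin n) (Fin n) ℝ :=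
  (1 + Hess n u x * Hess n u x)⁻¹

/-- the determinant `det g` of the induced metric `g = Iₙ + (D²u)²` -/
def detg (n : ℕ) (u : ES n → ℝ) (x : ES n) : ℝ :=
  (1 + Hess n u x * Hess n u x).det

/-- first partial derivative `∂ᵢ f (x)` -/
def pd1 (n : ℕ) (f : ES n → ℝ) (x : ES n) (i : Fin n) : ℝ :=
  fderiv ℝ f x (evec n i)

/-- second partial derivative `∂ᵢⱼ f (x)` -/
def pd2 (n : ℕ) (f : ES n → ℝ) (x : ES n) (i j : Fin n) : ℝ :=
  iteratedFDeriv ℝ 2 f x ![evec n i, evec n j]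

/-- third partial derivative `∂ᵢⱼₖ f (x)` -/
def pd3 (n : ℕ) (f : ES n → ℝ) (x : ES n) (i j k : Fin n) : ℝ :=
  iteratedFDeriv ℝ 3 f x ![evec n i, evec n j, evec n k]

/-- the Laplace–Beltrami operator of the gradient graph:
`Δ_g f = ∑ gⁱʲ ∂ᵢⱼ f − ∑ gʲᵖ ψ_q u_{pq} ∂ⱼ f` -/
def DeltaG (n : ℕ) (u ψ f : ES n → ℝ) (x : ES n) : ℝ :=
  (∑ i, ∑ j, ginv n u x i j * pd2 n f x i j) -
    ∑ j, ∑ p, ∑ q, ginv n u x j p * pd1 n ψ x q * pd2 n u x p q * pd1 n f x j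

/-- the squared gradient `|∇_g f|² = ∑ gⁱʲ ∂ᵢf ∂ⱼf` -/
def gradSq (n : ℕ) (u f : ES n → ℝ) (x : ES n) : ℝ :=
  ∑ i, ∑ j, ginv n u x i j * pd1 n f x i * pd1 n f x j

/-- the `k`-th elementary symmetric polynomial of `n` real variables -/
def esymmR (n k : ℕ) (lam : Fin n → ℝ) : ℝ :=
  ∑ s ∈ Finset.powersetCard k (Finset.univ : Finset (Fin n)), ∏ i ∈ s, lam i

/-- second-fundamental-form coefficients `h_{ijk}` at a point where `D²u` is diagonal -/
def hcoef (n : ℕ) (u : ES n → ℝ) (lam : Fin n → ℝ) (x : ES n) (i j k : Fin n) : ℝ :=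
  Real.sqrt (1 / (1 + lam i ^ 2)) * Real.sqrt (1 / (1 + lam j ^ 2)) *
    Real.sqrt (1 / (1 + lam k ^ 2)) * pd3 n u x i j k

/-- `lam x` lists the eigenvalues of the Hessian of `u` at every `x ∈ s` -/
def HessEig (n : ℕ) (u : ES n → ℝ) (lam : ES n → Fin n → ℝ) (s : Set (ES n)) : Prop :=
  ∀ x ∈ s, ∃ P : Matrix (Fin n) (Fin n) ℝ, P * Pᵀ = 1 ∧
    Hess n u x = P * Matrix.diagonal (lam x) * Pᵀ

/-
Write `r = |Du|`. Differentiating `r` twice gives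
`∂ₐₐ r = (|∂ₐ Du|² + ⟨Du, ∂ₐₐ Du⟩) / r - ⟨Du, ∂ₐ Du⟩² / r³`, which at a point where
`D²u = diag(λ)` reads `(λₐ² + ∑ᵢ uᵢ u_{aai}) / r - uₐ² λₐ² / r³`.
The third-order term comes from differentiating the equation without differentiating eigenvalues:
`det(I + i D²u) = ∏ (1 + i λₐ) = ρ e^{iψ}` with `ρ > 0`, so `∂ₖψ` is the imaginary part of the
logarithmic derivative of `det(I + i D²u)`, which Jacobi's formula evaluates at `x₀` as
`∑ₐ gᵃᵃ u_{aak}`. Contracting with `uₖ` and using the symmetry of `D³u` gives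
`∑ₐ gᵃᵃ ∑ᵢ uᵢ u_{aai} = ∑ᵢ ψᵢ uᵢ`; what is left is `∑ₐ gᵃᵃ (r² - uₐ²) λₐ² / r³ ≥ 0`.
-/

open scoped RealInnerProductSpace Topology

section SecondDerivatives

variable {E F : Type*} [NormedAddCommGroup E] [NormedSpace ℝ E] [NormedAddCommGroup F]
  [NormedSpace ℝ F] {x : E}

theorem fderiv_clm_apply_const_apply {G : Type*} [NormedAddCommGroup G] [NormedSpace ℝ G]
    {c : E → F →L[ℝ] G} (hc : DifferentiableAt ℝ c x) (w : F) (v : E) :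
    fderiv ℝ (fun y => c y w) x v = fderiv ℝ c x v w := by
  simp [fderiv_clm_apply hc (differentiableAt_const w)]

theorem ContDiffAt.differentiableAt_fderiv_fderiv {f : E → F} (hf : ContDiffAt ℝ 3 f x) :
    DifferentiableAt ℝ (fderiv ℝ (fderiv ℝ f)) x :=
  (hf.fderiv_right (m := 2) (by norm_num) |>.fderiv_right (m := 1) (by norm_num)).differentiableAt
    (by norm_num)

theorem fderiv_fderiv_fderiv_swap_left {f : E → F} (hf : ContDiffAt ℝ 3 f x) (v w z : E) :
    fderiv ℝ (fderiv ℝ (fderiv ℝ f)) x v w z = fderiv ℝ (fderiv ℝ (fderiv ℝ f)) x w v z := by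
  rw [(hf.fderiv_right (m := 2) (by norm_num)).isSymmSndFDerivAt (by simp) v w]

theorem fderiv_fderiv_fderiv_swap_right {f : E → F} (hf : ContDiffAt ℝ 3 f x) (v w z : E) :
    fderiv ℝ (fderiv ℝ (fderiv ℝ f)) x v w z = fderiv ℝ (fderiv ℝ (fderiv ℝ f)) x v z w := by
  have hD2 := hf.differentiableAt_fderiv_fderiv
  have hsymm : (fun y => fderiv ℝ (fderiv ℝ f) y w z) =ᶠ[𝓝 x]
      fun y => fderiv ℝ (fderiv ℝ f) y z w := by
    filter_upwards [hf.eventually (by simp)] with y hy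
    exact hy.isSymmSndFDerivAt (by simp; norm_num) w z
  rw [← fderiv_clm_apply_const_apply hD2, ← fderiv_clm_apply_const_apply (hD2.clm_apply
    (differentiableAt_const w)), hsymm.fderiv_eq, fderiv_clm_apply_const_apply (hD2.clm_apply
    (differentiableAt_const z)), fderiv_clm_apply_const_apply hD2]

theorem fderiv_fderiv_fderiv_rotate {f : E → F} (hf : ContDiffAt ℝ 3 f x) (v w : E) :
    fderiv ℝ (fderiv ℝ (fderiv ℝ f)) x v v w = fderiv ℝ (fderiv ℝ (fderiv ℝ f)) x w v v := by
  rw [fderiv_fderiv_fderiv_swap_right hf, fderiv_fderiv_fderiv_swap_left hf]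

end SecondDerivatives

section NormSecondDerivative

variable {E F : Type*} [NormedAddCommGroup E] [NormedSpace ℝ E] [NormedAddCommGroup F]
  [InnerProductSpace ℝ F] {G : E → F} {G' : E →L[ℝ] F} {x : E}

theorem HasFDerivAt.norm_of_ne_zero (hG : HasFDerivAt G G' x) (h0 : G x ≠ 0) :
    HasFDerivAt (fun y => ‖G y‖) (‖G x‖⁻¹ • (innerSL ℝ (G x)).comp G') x := by
  have hsq : ‖G x‖ ^ 2 ≠ 0 := by positivity
  convert hG.norm_sq.sqrt hsq using 1
  · simp only [Real.sqrt_sq (norm_nonneg _)]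
  · ext v
    simp only [_root_.smul_apply, ContinuousLinearMap.comp_apply, coe_innerSL_apply,
      smul_eq_mul, Real.sqrt_sq (norm_nonneg _), nsmul_eq_mul]
    ring

theorem fderiv_fderiv_norm_apply_self (hG : ContDiffAt ℝ 2 G x) (h0 : G x ≠ 0) (v : E) :
    fderiv ℝ (fderiv ℝ fun y => ‖G y‖) x v v =
      (‖fderiv ℝ G x v‖ ^ 2 + ⟪G x, fderiv ℝ (fderiv ℝ G) x v v⟫) / ‖G x‖ -
        ⟪G x, fderiv ℝ G x v⟫ ^ 2 / ‖G x‖ ^ 3 := by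
  have hDG : DifferentiableAt ℝ (fderiv ℝ G) x :=
    (hG.fderiv_right (m := 1) le_rfl).differentiableAt (by norm_num)
  have hnorm : DifferentiableAt ℝ (fderiv ℝ fun y => ‖G y‖) x :=
    ((hG.norm ℝ h0).fderiv_right (m := 1) le_rfl).differentiableAt (by norm_num)
  have hfirst : (fun y => fderiv ℝ (fun y => ‖G y‖) y v) =ᶠ[𝓝 x]
      fun y => ⟪G y, fderiv ℝ G y v⟫ * ‖G y‖⁻¹ := by
    filter_upwards [hG.eventually (by simp), hG.continuousAt.eventually_ne h0] with y hy hy0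
    rw [((hy.differentiableAt (by norm_num)).hasFDerivAt.norm_of_ne_zero hy0).fderiv]
    simp only [_root_.smul_apply, ContinuousLinearMap.comp_apply, coe_innerSL_apply,
      smul_eq_mul, mul_comm]
  have hinner := (hG.differentiableAt (by norm_num)).hasFDerivAt.inner ℝ
    (hDG.clm_apply (differentiableAt_const v)).hasFDerivAt
  have hinv : HasFDerivAt (fun y => ‖G y‖⁻¹) _ x :=
    (hasDerivAt_inv (norm_ne_zero_iff.mpr h0)).comp_hasFDerivAt x
      ((hG.differentiableAt (by norm_num)).hasFDerivAt.norm_of_ne_zero h0)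
  rw [← fderiv_clm_apply_const_apply hnorm, hfirst.fderiv_eq, (hinner.fun_mul hinv).fderiv]
  simp only [_root_.add_apply, _root_.smul_apply, ContinuousLinearMap.comp_apply, coe_innerSL_apply,
    smul_eq_mul, ContinuousLinearMap.prod_apply, fderiv_clm_apply_const_apply hDG,
    fderivInnerCLM_apply, real_inner_self_eq_norm_sq]
  field_simp
  ring

end NormSecondDerivative

section DetDerivative

variable {E ι 𝔸 : Type*} [NormedAddCommGroup E] [NormedSpace ℝ E] [Fintype ι] [DecidableEq ι]
  [NormedCommRing 𝔸] [NormedAlgebra ℝ 𝔸]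

theorem Equiv.Perm.exists_ne_apply_ne_of_ne_one {σ : Equiv.Perm ι} (hσ : σ ≠ 1) (i : ι) :
    ∃ j, j ≠ i ∧ σ j ≠ j := by
  obtain ⟨p, hp⟩ : ∃ p, σ p ≠ p := by
    by_contra! h
    exact hσ (Equiv.ext h)
  by_cases hpi : p = i
  · exact ⟨σ p, hpi ▸ hp, fun h => hp (σ.injective h)⟩
  · exact ⟨p, hpi, hp⟩

theorem hasFDerivAt_det_of_isDiag {M : E → Matrix ι ι 𝔸} {M' : ι → ι → E →L[ℝ] 𝔸} {x : E}
    (hM : ∀ i j, HasFDerivAt (fun y => M y i j) (M' i j) x) (hdiag : (M x).IsDiag) :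
    HasFDerivAt (fun y => (M y).det) (∑ a, (∏ b ∈ univ.erase a, M x b b) • M' a a) x := by
  have hterm (σ : Equiv.Perm ι) : HasFDerivAt (fun y => ∏ i, M y (σ i) i)
      (∑ i, (∏ j ∈ univ.erase i, M x (σ j) j) • M' (σ i) i) x :=
    HasFDerivAt.finsetProd fun i _ => hM (σ i) i
  have hdet := (HasFDerivAt.fun_sum fun σ (_ : σ ∈ univ) =>
    (hterm σ).const_smul (Equiv.Perm.sign σ)).congr_of_eventuallyEq
      (Filter.Eventually.of_forall fun y => det_apply (M y))
  rw [Finset.sum_eq_single 1 _ (by simp)] at hdet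
  · simpa using hdet
  intro σ _ hσ
  refine smul_eq_zero_of_right _ (Finset.sum_eq_zero fun i _ => ?_)
  obtain ⟨j, hji, hj⟩ := σ.exists_ne_apply_ne_of_ne_one hσ i
  have hzero : ∏ k ∈ univ.erase i, M x (σ k) k = 0 :=
    Finset.prod_eq_zero (mem_erase.mpr ⟨hji, mem_univ j⟩) (hdiag hj)
  rw [hzero]
  exact zero_smul _ _

end DetDerivative

section ComplexPhase

open Complex

theorem Complex.one_add_ofReal_mul_I (t : ℝ) :
    (1 + t * I : ℂ) = √(1 + t ^ 2) * exp (Real.arctan t * I) := by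
  have hs : (√(1 + t ^ 2) : ℂ) ≠ 0 := ofReal_ne_zero.mpr (by positivity)
  rw [exp_mul_I, ← ofReal_cos, ← ofReal_sin, Real.cos_arctan, Real.sin_arctan]
  push_cast
  field_simp

theorem Complex.im_ofReal_mul_I_div (t s : ℝ) : (t * I / (1 + s * I)).im = t / (1 + s ^ 2) := by
  simp only [div_im, mul_im, ofReal_re, I_im, mul_one, ofReal_im, I_re, mul_zero, add_zero, add_re,
    one_re, mul_re, sub_self, normSq_apply, add_im, one_im, zero_add, zero_mul, zero_div, sub_zero]
  field_simp

variable {E : Type*} [NormedAddCommGroup E] [NormedSpace ℝ E]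

theorem im_logDeriv_eq_of_eventually_eq_mul_exp {c : E → ℂ} {c' : E →L[ℝ] ℂ} {ψ : E → ℝ}
    {ψ' : E →L[ℝ] ℝ} {x : E} (hc : HasFDerivAt c c' x) (hψ : HasFDerivAt ψ ψ' x)
    (hcx : c x ≠ 0) (hpolar : ∀ᶠ y in 𝓝 x, ∃ r : ℝ, c y = r * exp (ψ y * I)) (w : E) :
    (c' w / c x).im = ψ' w := by
  have hrot := (((ofRealCLM.hasFDerivAt.comp x hψ).mul_const I).neg).cexp
  have hf := hc.mul hrot
  -- `c e^{-iψ}` is real near `x`, so the imaginary part of its derivative vanishes.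
  have hreal : ∀ᶠ y in 𝓝 x, (c y * exp (-(ψ y * I))).im = 0 := by
    filter_upwards [hpolar] with y ⟨r, hr⟩
    rw [hr, mul_assoc, ← Complex.exp_add, add_neg_cancel, Complex.exp_zero, mul_one, ofReal_im]
  have him : (imCLM.comp _ : E →L[ℝ] ℝ) = 0 :=
    (imCLM.hasFDerivAt.comp x hf).unique ((hasFDerivAt_const 0 x).congr_of_eventuallyEq hreal)
  obtain ⟨r, hr⟩ := hpolar.self_of_nhds
  set e := exp (-(ψ x * I)) with he
  have hw : (c x * e * -(ψ' w * I) + e * c' w).im = 0 := by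
    simpa [he, mul_assoc] using DFunLike.congr_fun him w
  have hce : c x * e = r := by
    rw [hr, he, mul_assoc, ← Complex.exp_add, add_neg_cancel, Complex.exp_zero, mul_one]
  have hdecomp : c' w / c x = (c x * e * -(ψ' w * I) + e * c' w) / (c x * e) + ψ' w * I := by
    have : e ≠ 0 := exp_ne_zero _
    field_simp
    ring
  rw [hce] at hw
  rw [hdecomp, add_im, hce, div_ofReal_im, hw]
  simp

end ComplexPhase

section OrthogonalConjugation

open Complex

variable {ι : Type*} [DecidableEq ι]

theorem Matrix.det_one_add_conj_of_mul_transpose_eq_one [Fintype ι] {R : Type*} [CommRing R]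
    {P : Matrix ι ι R} (hP : P * Pᵀ = 1) (B : Matrix ι ι R) :
    (1 + P * B * Pᵀ).det = (1 + B).det := by
  have hdetP : P.det * P.det = 1 := by
    simpa only [det_mul, det_transpose, det_one] using congrArg det hP
  rw [show 1 + P * B * Pᵀ = P * (1 + B) * Pᵀ by rw [Matrix.mul_add, Matrix.add_mul, mul_one, hP],
    det_mul, det_mul, det_transpose, mul_right_comm, hdetP, one_mul]

theorem Matrix.one_add_I_smul_map_diagonal (μ : ι → ℝ) :
    1 + I • (diagonal μ).map ofRealHom = diagonal fun a => 1 + μ a * I := by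
  rw [diagonal_map (map_zero _), ← diagonal_smul, ← diagonal_one, diagonal_add]
  simp_rw [Pi.smul_apply, smul_eq_mul, ofRealHom_eq_coe, mul_comm I]

theorem Matrix.det_one_add_I_smul_map_eq_prod [Fintype ι] {H P : Matrix ι ι ℝ} {μ : ι → ℝ}
    (hP : P * Pᵀ = 1) (hH : H = P * diagonal μ * Pᵀ) :
    (1 + I • H.map ofRealHom).det = ∏ a, (1 + μ a * I) := by
  have hPc : P.map ofRealHom * (P.map ofRealHom)ᵀ = 1 := by
    rw [← transpose_map, ← Matrix.map_mul, hP, Matrix.map_one _ (map_zero _) (map_one _)]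
  have hconj : I • H.map ofRealHom =
      P.map ofRealHom * (I • (diagonal μ).map ofRealHom) * (P.map ofRealHom)ᵀ := by
    rw [hH, Matrix.map_mul, Matrix.map_mul, transpose_map, Matrix.mul_smul, Matrix.smul_mul]
  rw [hconj, det_one_add_conj_of_mul_transpose_eq_one hPc, one_add_I_smul_map_diagonal,
    det_diagonal]

end OrthogonalConjugation

section GradientNorm

variable {E : Type*} [NormedAddCommGroup E] [InnerProductSpace ℝ E] [CompleteSpace E]
  {u : E → ℝ} {x : E}

theorem fderiv_gradient_apply (y v : E) :
    fderiv ℝ (gradient u) y v =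
      (InnerProductSpace.toDual ℝ E).symm (fderiv ℝ (fderiv ℝ u) y v) := by
  have h := (InnerProductSpace.toDual ℝ E).symm.comp_fderiv (f := fderiv ℝ u) (x := y)
  exact DFunLike.congr_fun h v

theorem fderiv_fderiv_norm_gradient_apply_self (hu : ContDiffAt ℝ 3 u x) (h0 : gradient u x ≠ 0)
    (v : E) :
    fderiv ℝ (fderiv ℝ fun y => ‖gradient u y‖) x v v =
      (‖fderiv ℝ (fderiv ℝ u) x v‖ ^ 2 + fderiv ℝ (fderiv ℝ (fderiv ℝ u)) x v v (gradient u x)) /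
          ‖gradient u x‖ - fderiv ℝ (fderiv ℝ u) x v (gradient u x) ^ 2 / ‖gradient u x‖ ^ 3 := by
  have hgrad : ContDiffAt ℝ 2 (gradient u) x :=
    (InnerProductSpace.toDual ℝ E).symm.contDiff.contDiffAt.comp x
      (hu.fderiv_right (m := 2) (by norm_num))
  have hD2 := hu.differentiableAt_fderiv_fderiv
  have hinner (ℓ : StrongDual ℝ E) :
      ⟪gradient u x, (InnerProductSpace.toDual ℝ E).symm ℓ⟫ = ℓ (gradient u x) := by
    rw [real_inner_comm, InnerProductSpace.toDual_symm_apply]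
  have hthird : fderiv ℝ (fderiv ℝ (gradient u)) x v v =
      (InnerProductSpace.toDual ℝ E).symm (fderiv ℝ (fderiv ℝ (fderiv ℝ u)) x v v) := by
    rw [← fderiv_clm_apply_const_apply ((hgrad.fderiv_right (m := 1) le_rfl).differentiableAt
      (by norm_num))]
    simp_rw [fderiv_gradient_apply]
    rw [← Function.comp_def, LinearIsometryEquiv.comp_fderiv, ContinuousLinearMap.comp_apply,
      fderiv_clm_apply_const_apply hD2]
    rfl
  rw [fderiv_fderiv_norm_apply_self hgrad h0, hthird, fderiv_gradient_apply, hinner, hinner,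
    LinearIsometryEquiv.norm_map]

end GradientNorm

section EuclideanCoordinates

open Complex

variable {n : ℕ}

theorem apply_eq_sum_evec (ℓ : ES n →L[ℝ] ℝ) (w : ES n) : ℓ w = ∑ i, ℓ (evec n i) * w i := by
  conv_lhs => rw [← (EuclideanSpace.basisFun (Fin n) ℝ).sum_repr w]
  simp [evec, mul_comm]

theorem pd2_eq_fderiv (f : ES n → ℝ) (x : ES n) (i j : Fin n) :
    pd2 n f x i j = fderiv ℝ (fderiv ℝ f) x (evec n i) (evec n j) := by
  rw [pd2, iteratedFDeriv_two_apply]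
  rfl

theorem hess_apply_eq_fderiv (u : ES n → ℝ) (y : ES n) (i j : Fin n) :
    Hess n u y i j = fderiv ℝ (fderiv ℝ u) y (evec n i) (evec n j) :=
  pd2_eq_fderiv u y i j

theorem gradient_apply_eq_pd1 (f : ES n → ℝ) (x : ES n) (i : Fin n) :
    gradient f x i = pd1 n f x i := by
  rw [pd1, ← InnerProductSpace.toDual_symm_apply, evec, EuclideanSpace.inner_single_right]
  simp [gradient]

theorem fderiv_apply_gradient_eq_sum (f g : ES n → ℝ) (x y : ES n) :
    fderiv ℝ f x (gradient g y) = ∑ i, pd1 n f x i * pd1 n g y i := by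
  rw [apply_eq_sum_evec]
  simp_rw [gradient_apply_eq_pd1]
  rfl

theorem pd1_sq_le_norm_gradient_sq (f : ES n → ℝ) (x : ES n) (i : Fin n) :
    pd1 n f x i ^ 2 ≤ ‖gradient f x‖ ^ 2 := by
  simpa [← gradient_apply_eq_pd1] using
    pow_le_pow_left₀ (norm_nonneg _) (PiLp.norm_apply_le (gradient f x) i) 2

variable {u : ES n → ℝ} {x : ES n} {lam : Fin n → ℝ}

theorem fderiv_fderiv_apply_evec_of_hess_eq_diagonal (hdiag : Hess n u x = diagonal lam)
    (a : Fin n) (w : ES n) : fderiv ℝ (fderiv ℝ u) x (evec n a) w = lam a * w a := by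
  rw [apply_eq_sum_evec]
  simp_rw [← hess_apply_eq_fderiv, hdiag]
  simp [diagonal_apply]

theorem norm_fderiv_fderiv_apply_evec_of_hess_eq_diagonal (hdiag : Hess n u x = diagonal lam)
    (a : Fin n) : ‖fderiv ℝ (fderiv ℝ u) x (evec n a)‖ = |lam a| := by
  have h : fderiv ℝ (fderiv ℝ u) x (evec n a) = lam a • innerSL ℝ (evec n a) := by
    ext w
    rw [fderiv_fderiv_apply_evec_of_hess_eq_diagonal hdiag]
    simp [evec, EuclideanSpace.inner_single_left]
  rw [h, norm_smul, innerSL_apply_norm]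
  simp [evec]

theorem differentiableAt_hess_apply (hu : ContDiffAt ℝ 3 u x) (i j : Fin n) :
    DifferentiableAt ℝ (fun y => Hess n u y i j) x := by
  simp_rw [hess_apply_eq_fderiv]
  exact ((hu.differentiableAt_fderiv_fderiv).clm_apply (differentiableAt_const _)).clm_apply
    (differentiableAt_const _)

theorem fderiv_hess_apply (hu : ContDiffAt ℝ 3 u x) (i j : Fin n) (w : ES n) :
    fderiv ℝ (fun y => Hess n u y i j) x w =
      fderiv ℝ (fderiv ℝ (fderiv ℝ u)) x w (evec n i) (evec n j) := by
  have hD2 := hu.differentiableAt_fderiv_fderiv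
  simp_rw [hess_apply_eq_fderiv]
  rw [fderiv_clm_apply_const_apply (hD2.clm_apply (differentiableAt_const _)),
    fderiv_clm_apply_const_apply hD2]

theorem pd2_norm_gradient_of_hess_eq_diagonal (hu : ContDiffAt ℝ 3 u x)
    (hdiag : Hess n u x = diagonal lam) (hDu : gradient u x ≠ 0) (a : Fin n) :
    pd2 n (fun y => ‖gradient u y‖) x a a =
      (lam a ^ 2 + fderiv ℝ (fderiv ℝ (fderiv ℝ u)) x (evec n a) (evec n a) (gradient u x)) /
          ‖gradient u x‖ - (lam a * pd1 n u x a) ^ 2 / ‖gradient u x‖ ^ 3 := by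
  rw [pd2_eq_fderiv, fderiv_fderiv_norm_gradient_apply_self hu hDu,
    norm_fderiv_fderiv_apply_evec_of_hess_eq_diagonal hdiag, sq_abs,
    fderiv_fderiv_apply_evec_of_hess_eq_diagonal hdiag, gradient_apply_eq_pd1]

theorem fderiv_phase_eq_sum {Ω : Set (ES n)} (hΩ : Ω ∈ 𝓝 x) {ψ : ES n → ℝ}
    {lamF : ES n → Fin n → ℝ} (hu : ContDiffAt ℝ 3 u x) (hψ : DifferentiableAt ℝ ψ x)
    (heig : HessEig n u lamF Ω) (heq : ∀ y ∈ Ω, ∑ i, Real.arctan (lamF y i) = ψ y)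
    (hdiag : Hess n u x = diagonal lam) (w : ES n) :
    fderiv ℝ ψ x w =
      ∑ a, fderiv ℝ (fderiv ℝ (fderiv ℝ u)) x w (evec n a) (evec n a) / (1 + lam a ^ 2) := by
  set M : ES n → Matrix (Fin n) (Fin n) ℂ := fun y => 1 + I • (Hess n u y).map ofRealHom with hM
  have hMx : M x = diagonal fun a => 1 + lam a * I := by
    simp only [hM, hdiag, Matrix.one_add_I_smul_map_diagonal]
  have hpolar : ∀ᶠ y in 𝓝 x, ∃ r : ℝ, (M y).det = r * exp (ψ y * I) := by
    filter_upwards [hΩ] with y hy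
    obtain ⟨P, hP, hH⟩ := heig y hy
    refine ⟨∏ a, √(1 + lamF y a ^ 2), ?_⟩
    rw [Matrix.det_one_add_I_smul_map_eq_prod hP hH, ← heq y hy]
    simp_rw [one_add_ofReal_mul_I]
    rw [prod_mul_distrib, ← Complex.exp_sum, ofReal_prod, ofReal_sum, sum_mul]
  have hentries (i j : Fin n) : HasFDerivAt (fun y => M y i j)
      (I • ofRealCLM.comp (fderiv ℝ (fun y => Hess n u y i j) x)) x :=
    ((ofRealCLM.hasFDerivAt.comp x (differentiableAt_hess_apply hu i j).hasFDerivAt).const_mul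
      I).const_add _
  have hdet := hasFDerivAt_det_of_isDiag hentries (hMx ▸ isDiag_diagonal _)
  have hfactor (a : Fin n) : 1 + lam a * I ≠ 0 := fun h => by simpa using congrArg re h
  have hcx : (M x).det ≠ 0 := by
    rw [hMx, det_diagonal]
    exact prod_ne_zero_iff.mpr fun a _ => hfactor a
  rw [← im_logDeriv_eq_of_eventually_eq_mul_exp hdet hψ.hasFDerivAt hcx hpolar w, hMx]
  have hterm (a : Fin n) (t : ℝ) :
      (∏ b ∈ univ.erase a, (1 + lam b * I)) * (I * t) / ∏ b, (1 + lam b * I) =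
        t * I / (1 + lam a * I) := by
    have hrest : ∏ b ∈ univ.erase a, (1 + lam b * I) ≠ 0 :=
      prod_ne_zero_iff.mpr fun b _ => hfactor b
    rw [← mul_prod_erase univ _ (mem_univ a), mul_comm (1 + (lam a : ℂ) * I), ← div_div,
      mul_div_cancel_left₀ _ hrest, mul_comm I]
  simp only [det_diagonal, diagonal_apply_eq, _root_.sum_apply, _root_.smul_apply,
    ContinuousLinearMap.comp_apply, ofRealCLM_apply, smul_eq_mul, fderiv_hess_apply hu, sum_div,
    hterm, im_sum, im_ofReal_mul_I_div]

end EuclideanCoordinates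

/-- computation of `∑ gᵃᵃ ∂ₐₐ|Du|` at a diagonalization point, and the
resulting lower bound. -/
theorem grad_norm_laplacian (n : ℕ) (Ω : Set (ES n)) (hΩ : IsOpen Ω) (x₀ : ES n)
    (hx₀ : x₀ ∈ Ω)
    (u ψ : ES n → ℝ) (lamF : ES n → Fin n → ℝ)
    (hu : ContDiffOn ℝ 3 u Ω) (hψ : ContDiffOn ℝ 1 ψ Ω)
    (heig : HessEig n u lamF Ω)
    (heq : ∀ x ∈ Ω, ∑ i, Real.arctan (lamF x i) = ψ x)
    (lam : Fin n → ℝ) (hdiag : Hess n u x₀ = Matrix.diagonal lam)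
    (hDu : gradient u x₀ ≠ 0) :
    (∑ a, (1 / (1 + lam a ^ 2)) * pd2 n (fun y => ‖gradient u y‖) x₀ a a) =
        (∑ i, pd1 n ψ x₀ i * pd1 n u x₀ i) / ‖gradient u x₀‖ +
          ∑ a, (1 / (1 + lam a ^ 2)) *
            ((‖gradient u x₀‖ ^ 2 - pd1 n u x₀ a ^ 2) * lam a ^ 2 / ‖gradient u x₀‖ ^ 3) ∧
      (∑ a, (1 / (1 + lam a ^ 2)) * pd2 n (fun y => ‖gradient u y‖) x₀ a a) ≥
        (∑ i, pd1 n ψ x₀ i * pd1 n u x₀ i) / ‖gradient u x₀‖ := by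
  have hu₀ : ContDiffAt ℝ 3 u x₀ := hu.contDiffAt (hΩ.mem_nhds hx₀)
  have hψ₀ : DifferentiableAt ℝ ψ x₀ :=
    (hψ.contDiffAt (hΩ.mem_nhds hx₀)).differentiableAt one_ne_zero
  have hphase : ∑ a, fderiv ℝ (fderiv ℝ (fderiv ℝ u)) x₀ (evec n a) (evec n a) (gradient u x₀) /
      (1 + lam a ^ 2) = ∑ i, pd1 n ψ x₀ i * pd1 n u x₀ i := by
    rw [← fderiv_apply_gradient_eq_sum,
      fderiv_phase_eq_sum (hΩ.mem_nhds hx₀) hu₀ hψ₀ heig heq hdiag]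
    exact sum_congr rfl fun a _ => by rw [fderiv_fderiv_fderiv_rotate hu₀]
  have hformula : ∑ a, (1 / (1 + lam a ^ 2)) * pd2 n (fun y => ‖gradient u y‖) x₀ a a =
      (∑ a, fderiv ℝ (fderiv ℝ (fderiv ℝ u)) x₀ (evec n a) (evec n a) (gradient u x₀) /
          (1 + lam a ^ 2)) / ‖gradient u x₀‖ +
        ∑ a, (1 / (1 + lam a ^ 2)) *
          ((‖gradient u x₀‖ ^ 2 - pd1 n u x₀ a ^ 2) * lam a ^ 2 / ‖gradient u x₀‖ ^ 3) := by
    have hr : ‖gradient u x₀‖ ≠ 0 := norm_ne_zero_iff.mpr hDu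
    rw [sum_div, ← sum_add_distrib]
    refine sum_congr rfl fun a _ => ?_
    rw [pd2_norm_gradient_of_hess_eq_diagonal hu₀ hdiag hDu]
    field_simp
    ring
  rw [hphase] at hformula
  refine ⟨hformula, ?_⟩
  rw [hformula, ge_iff_le, le_add_iff_nonneg_right]
  refine sum_nonneg fun a _ => ?_
  have hcoord := sub_nonneg.mpr (pd1_sq_le_norm_gradient_sq u x₀ a)
  exact mul_nonneg (by positivity) (div_nonneg (mul_nonneg hcoord (sq_nonneg _)) (by positivity))
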